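/- arXiv:2512.09661 — 2 statements merged into one kernel-verified Lean document; each statement's English description precedes it below -/
import Mathlib

section
/- Let 𝕜 be a nontrivially normed field of characteristic zero, let d and n be natural numbers, let t ∈ 𝕜^n, and let f : 𝕜^d → 𝕜^n be a map that is differentiable at a point x ∈ 𝕜^d with surjective derivative Df_x (i.e., f is a submersion at x). Then the total derivative of the composite φ_t ∘ f at x is the zero linear map if and only if f(x) = t. -/
/-- If `f : 𝕜^d → 𝕜^n` is differentiable at `x` with surjective derivative
(a submersion at `x`), then the derivative of `φ_t ∘ f` at `x` vanishes
identically iff `f x = t`. -/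
theorem stmt2 (𝕜 : Type*) [NontriviallyNormedField 𝕜] [CharZero 𝕜] (d n : ℕ)
    (t : Fin n → 𝕜) (f : (Fin d → 𝕜) → (Fin n → 𝕜)) (x : Fin d → 𝕜)
    (hf : DifferentiableAt 𝕜 f x)
    (hsurj : Function.Surjective (fderiv 𝕜 f x)) :
    fderiv 𝕜 ((fun y : Fin n → 𝕜 => fun i => (y i - t i) ^ 2) ∘ f) x = 0 ↔ f x = t := by
  set L : (Fin n → 𝕜) →L[𝕜] (Fin n → 𝕜) :=
    ContinuousLinearMap.pi fun i =>
      ((2 : 𝕜) * (f x i - t i)) • (ContinuousLinearMap.proj i) with hL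
  have hφ : HasFDerivAt (𝕜 := 𝕜) (fun y : Fin n → 𝕜 => fun i => (y i - t i) ^ 2) L (f x) := by
    rw [hL, hasFDerivAt_pi]
    intro i
    have h : HasFDerivAt (𝕜 := 𝕜) (fun z : Fin n → 𝕜 => z i - t i)
        (ContinuousLinearMap.proj i) (f x) := (hasFDerivAt_apply i (f x)).sub_const (t i)
    have h2 := h.mul h
    convert h2 using 1
    · rfl
    · ext z; simp only [Pi.mul_apply]; ring
    · module
  have hcomp := (hφ.comp x hf.hasFDerivAt).fderiv
  rw [hcomp]
  constructor
  · intro h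
    have hLz : L = 0 := by
      ext v
      obtain ⟨u, hu⟩ := hsurj v
      rename_i j
      have := congrFun (congrArg (fun (M : (Fin d → 𝕜) →L[𝕜] (Fin n → 𝕜)) => M u) h) j
      simpa [hu] using this
    funext i
    have e : (2 : 𝕜) * (f x i - t i) = 0 := by
      have := congrFun (congrArg (fun (M : (Fin n → 𝕜) →L[𝕜] (Fin n → 𝕜)) =>
        M (Pi.single i 1)) hLz) i
      simpa [hL] using this
    have h2 : (f x i - t i) = 0 := by
      rcases mul_eq_zero.mp e with h2 | h2
      · exact absurd h2 two_ne_zero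
      · exact h2
    exact sub_eq_zero.mp h2
  · intro h
    have : L = 0 := by
      ext v i
      simp [hL, h]
    rw [this, ContinuousLinearMap.zero_comp]
end

section
/- Let p be a prime, d ≥ 1 a natural number, G a topological group, and S ⊆ G an infinite subset. If the set of continuous group homomorphisms from G to GL_d(ℚ_p) has cardinality strictly greater than 2^{#S}, then S does not topologically generate G; that is, the closure of the subgroup generated by S is a proper subgroup of G. -/
open Cardinal

universe u

lemma padic_card_le (p : ℕ) [Fact p.Prime] : #ℚ_[p] ≤ 𝔠 := by
  have h1 : #ℚ_[p] ≤ #(CauSeq ℚ (padicNorm p)) := mk_le_of_surjective Quotient.mk''_surjective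
  have h2 : #(CauSeq ℚ (padicNorm p)) ≤ #(ℕ → ℚ) :=
    mk_le_of_injective (f := Subtype.val) Subtype.val_injective
  have h3 : #(ℕ → ℚ) = 𝔠 := by
    rw [mk_arrow, mk_denumerable, mk_denumerable, lift_aleph0, aleph0_power_aleph0]
  exact h1.trans (h2.trans h3.le)

lemma gl_card_le (p : ℕ) [Fact p.Prime] (d : ℕ) :
    #(GL (Fin d) ℚ_[p]) ≤ 𝔠 := by
  have h1 : #(GL (Fin d) ℚ_[p]) ≤ #(Matrix (Fin d) (Fin d) ℚ_[p]) :=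
    mk_le_of_injective (f := Units.val) (fun a b h => Units.ext h)
  refine h1.trans ?_
  have h2 : #(Matrix (Fin d) (Fin d) ℚ_[p]) = (#ℚ_[p] ^ (d : Cardinal)) ^ (d : Cardinal) := by
    show #(Fin d → Fin d → ℚ_[p]) = _
    rw [mk_arrow, mk_arrow]; simp
  rw [h2, ← power_mul, ← Nat.cast_mul]
  rcases Nat.eq_zero_or_pos (d * d) with h | h
  · rw [h]; simpa using (nat_lt_continuum 1).le
  · calc #ℚ_[p] ^ ((d*d : ℕ) : Cardinal) ≤ 𝔠 ^ ((d*d : ℕ) : Cardinal) :=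
          power_le_power_right (padic_card_le p)
      _ = 𝔠 := power_nat_eq aleph0_le_continuum h

/-- If `S ⊆ G` is infinite and there are more than `2^(#S)` continuous
homomorphisms `G → GL_d(ℚ_p)`, then `S` does not topologically generate `G`. -/
theorem stmt8 (p : ℕ) [Fact p.Prime] (d : ℕ) (hd : 1 ≤ d)
    (G : Type u) [Group G] [TopologicalSpace G] [IsTopologicalGroup G]
    (S : Set G) (hSinf : S.Infinite)
    (hcard : 2 ^ #S < #{f : G →* GL (Fin d) ℚ_[p] // Continuous f}) :
    closure ((Subgroup.closure S : Subgroup G) : Set G) ≠ Set.univ := by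
  intro hgen
  have hdense : Dense ((Subgroup.closure S : Subgroup G) : Set G) := by
    rw [dense_iff_closure_eq, hgen]
  -- restriction to S is injective on continuous homs
  have hinj : Function.Injective
      (fun f : {f : G →* GL (Fin d) ℚ_[p] // Continuous f} => (fun s : S => f.1 s.1)) := by
    intro f g hfg
    have hS : S ⊆ (f.1.eqLocus g.1 : Set G) := by
      intro x hx
      exact congrFun hfg ⟨x, hx⟩
    have hsub : (Subgroup.closure S : Subgroup G) ≤ f.1.eqLocus g.1 :=
      (Subgroup.closure_le _).mpr hS
    have heq : f.1 = g.1 := by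
      apply MonoidHom.ext
      have h := Continuous.ext_on hdense f.2 g.2 (fun x hx => hsub hx)
      exact fun x => congrFun h x
    exact Subtype.ext heq
  have haleph : ℵ₀ ≤ #S := by have := hSinf.to_subtype; exact aleph0_le_mk S
  have h1 : #{f : G →* GL (Fin d) ℚ_[p] // Continuous f} ≤ #(S → GL (Fin d) ℚ_[p]) :=
    mk_le_of_injective hinj
  have h2 : #(S → GL (Fin d) ℚ_[p]) ≤ 2 ^ #S := by
    rw [mk_arrow]
    have hgl : lift.{u} #(GL (Fin d) ℚ_[p]) ≤ 2 ^ (lift.{u} #S) := by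
      calc lift.{u} #(GL (Fin d) ℚ_[p]) ≤ lift.{u} 𝔠 := lift_le.mpr (gl_card_le p d)
        _ = 𝔠 := lift_continuum
        _ = 2 ^ (ℵ₀ : Cardinal) := rfl
        _ ≤ 2 ^ (lift.{u} #S) := power_le_power_left two_ne_zero (by simpa using haleph)
    calc lift.{u} #(GL (Fin d) ℚ_[p]) ^ lift.{0} #S
        ≤ (2 ^ (lift.{u} #S)) ^ lift.{0} #S := power_le_power_right (by simpa using hgl)
      _ = 2 ^ (#S * #S) := by rw [← power_mul]; simp
      _ = 2 ^ #S := by rw [mul_eq_self haleph]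
  exact absurd (h1.trans h2) (not_le.mpr hcard)
end
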